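/- Let m, k ∈ ℕ, let A be a nonempty index set, let (p_α, θ_α) ∈ [1,∞]² and ν_α > 0 for α ∈ A, and suppose inf_{α∈A} ν_α > 0. Set M = ⋂_{α∈A} ν_α B^{m,k}_{p_α,θ_α}. Then there exist l ∈ ℕ and indices α_1, …, α_l ∈ A such that, with M' = ⋂_{i=1}^{l} ν_{α_i} B^{m,k}_{p_{α_i},θ_{α_i}}, one has M ⊂ M' ⊂ 2M. -/

import Mathlib

open scoped ENNReal NNReal BigOperators Pointwise

noncomputable section

def lNorm (s : ℝ≥0∞) {ι : Type*} [Fintype ι] (x : ι → ℝ) : ℝ :=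
  if s = ∞ then ⨆ i, |x i| else (∑ i, |x i| ^ s.toReal) ^ (1 / s.toReal)

def mixedNorm (p θ : ℝ≥0∞) {m k : ℕ} (x : Fin m → Fin k → ℝ) : ℝ :=
  lNorm θ fun j => lNorm p fun i => x i j

def mixedBall (m k : ℕ) (p θ : ℝ≥0∞) : Set (Fin m → Fin k → ℝ) :=
  {x | mixedNorm p θ x ≤ 1}

def kolWidth (m k n : ℕ) (M : Set (Fin m → Fin k → ℝ)) (q σ : ℝ≥0∞) : ℝ :=
  ⨅ L : {L : Submodule ℝ (Fin m → Fin k → ℝ) // Module.finrank ℝ L ≤ n},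
    ⨆ x : M, ⨅ y : L.1,
      mixedNorm q σ ((x : Fin m → Fin k → ℝ) - (y : Fin m → Fin k → ℝ))

def ir (p : ℝ≥0∞) : ℝ := p⁻¹.toReal

def omegaE (p q : ℝ≥0∞) : ℝ :=
  if q = 2 then 1 else min ((ir p - ir q) / (1 / 2 - ir q)) 1

def expOf (t : ℝ) : ℝ≥0∞ := (ENNReal.ofReal t)⁻¹

def Phi (q σ : ℝ≥0∞) (m k n : ℕ) (p θ : ℝ≥0∞) : ℝ≥0∞ :=
  let M : ℝ≥0∞ := m
  let K : ℝ≥0∞ := k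
  let W : ℝ≥0∞ := ((n : ℝ≥0∞))⁻¹ ^ ((1 : ℝ) / 2) * M ^ ir q * K ^ ir σ
  let Wm : ℝ≥0∞ := ((n : ℝ≥0∞))⁻¹ ^ ((1 : ℝ) / 2) * M ^ ((1 : ℝ) / 2) * K ^ ir σ
  let Wk : ℝ≥0∞ := ((n : ℝ≥0∞))⁻¹ ^ ((1 : ℝ) / 2) * M ^ ir q * K ^ ((1 : ℝ) / 2)
  if q ≤ p then
    if σ ≤ θ then
      M ^ (ir q - ir p) * K ^ (ir σ - ir θ)
    else
      min (M ^ (ir q - ir p)) (M ^ (ir q - ir p) * Wm ^ omegaE θ σ)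
  else if σ ≤ θ then
    min (K ^ (ir σ - ir θ)) (K ^ (ir σ - ir θ) * Wk ^ omegaE p q)
  else if p ≤ 2 ∧ θ ≤ 2 then
    min 1 W
  else if omegaE p q ≤ omegaE θ σ then
    min (min 1 (W ^ omegaE p q)) (M ^ (ir q - ir p) * Wm ^ omegaE θ σ)
  else
    min (min 1 (W ^ omegaE θ σ)) (K ^ (ir σ - ir θ) * Wk ^ omegaE p q)

/-- `Ψ₀ = inf_{α ∈ A} ν_α Φ(p_α, θ_α)`. -/
def Psi0 {A : Type*} (q σ : ℝ≥0∞) (m k n : ℕ) (p θ : A → ℝ≥0∞) (ν : A → ℝ) : ℝ≥0∞ :=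
  ⨅ a : A, ENNReal.ofReal (ν a) * Phi q σ m k n (p a) (θ a)

/-- `Ψ₁`: infimum over pairs `(α, β) ∈ N₁`, i.e. `p_α ≠ q` and
`1/q = (1−λ)/p_α + λ/p_β` for some `λ ∈ (0,1)`, of
`ν_α^{1−λ} ν_β^{λ} Φ(q, θ̂_{α,β})` where `1/θ̂_{α,β} = (1−λ)/θ_α + λ/θ_β`. -/
def Psi1 {A : Type*} (q σ : ℝ≥0∞) (m k n : ℕ) (p θ : A → ℝ≥0∞) (ν : A → ℝ) : ℝ≥0∞ :=
  ⨅ (a : A) (b : A) (lam : ℝ)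
    (_ : 0 < lam ∧ lam < 1 ∧ p a ≠ q ∧
      ir q = (1 - lam) * ir (p a) + lam * ir (p b)),
    ENNReal.ofReal (ν a) ^ (1 - lam) * ENNReal.ofReal (ν b) ^ lam *
      Phi q σ m k n q (expOf ((1 - lam) * ir (θ a) + lam * ir (θ b)))

/-- `Ψ₂`: infimum over `(α, β) ∈ N₂` of `ν_α^{1−μ} ν_β^{μ} Φ(p̂_{α,β}, σ)`. -/
def Psi2 {A : Type*} (q σ : ℝ≥0∞) (m k n : ℕ) (p θ : A → ℝ≥0∞) (ν : A → ℝ) : ℝ≥0∞ :=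
  ⨅ (a : A) (b : A) (lam : ℝ)
    (_ : 0 < lam ∧ lam < 1 ∧ θ a ≠ σ ∧
      ir σ = (1 - lam) * ir (θ a) + lam * ir (θ b)),
    ENNReal.ofReal (ν a) ^ (1 - lam) * ENNReal.ofReal (ν b) ^ lam *
      Phi q σ m k n (expOf ((1 - lam) * ir (p a) + lam * ir (p b))) σ

/-- `Ψ₃`: infimum over `(α, β) ∈ N₃` of `ν_α^{1−λ} ν_β^{λ} Φ(2, θ̃_{α,β})`. -/
def Psi3 {A : Type*} (q σ : ℝ≥0∞) (m k n : ℕ) (p θ : A → ℝ≥0∞) (ν : A → ℝ) : ℝ≥0∞ :=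
  ⨅ (a : A) (b : A) (lam : ℝ)
    (_ : 0 < lam ∧ lam < 1 ∧ p a ≠ 2 ∧
      (1 : ℝ) / 2 = (1 - lam) * ir (p a) + lam * ir (p b)),
    ENNReal.ofReal (ν a) ^ (1 - lam) * ENNReal.ofReal (ν b) ^ lam *
      Phi q σ m k n 2 (expOf ((1 - lam) * ir (θ a) + lam * ir (θ b)))

/-- `Ψ₄`: infimum over `(α, β) ∈ N₄` of `ν_α^{1−μ} ν_β^{μ} Φ(p̃_{α,β}, 2)`. -/
def Psi4 {A : Type*} (q σ : ℝ≥0∞) (m k n : ℕ) (p θ : A → ℝ≥0∞) (ν : A → ℝ) : ℝ≥0∞ :=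
  ⨅ (a : A) (b : A) (lam : ℝ)
    (_ : 0 < lam ∧ lam < 1 ∧ θ a ≠ 2 ∧
      (1 : ℝ) / 2 = (1 - lam) * ir (θ a) + lam * ir (θ b)),
    ENNReal.ofReal (ν a) ^ (1 - lam) * ENNReal.ofReal (ν b) ^ lam *
      Phi q σ m k n (expOf ((1 - lam) * ir (p a) + lam * ir (p b))) 2

/-- `Ψ₅`: infimum over `(α, β) ∈ N₅`, i.e. such that for some `λ ∈ (0,1)` the
interpolated exponents satisfy `p_{α,β} ∈ (2,q)`, `θ_{α,β} ∈ (2,σ)`, lie on the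
"critical line", while `(1/p_α, 1/θ_α)` does not, of
`ν_α^{1−λ} ν_β^{λ} Φ(p_{α,β}, θ_{α,β})`. -/
def Psi5 {A : Type*} (q σ : ℝ≥0∞) (m k n : ℕ) (p θ : A → ℝ≥0∞) (ν : A → ℝ) : ℝ≥0∞ :=
  ⨅ (a : A) (b : A) (lam : ℝ)
    (_ : 0 < lam ∧ lam < 1 ∧
      ir q < (1 - lam) * ir (p a) + lam * ir (p b) ∧
      (1 - lam) * ir (p a) + lam * ir (p b) < 1 / 2 ∧
      ir σ < (1 - lam) * ir (θ a) + lam * ir (θ b) ∧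
      (1 - lam) * ir (θ a) + lam * ir (θ b) < 1 / 2 ∧
      ((1 - lam) * ir (p a) + lam * ir (p b) - ir q) / (1 / 2 - ir q) =
        ((1 - lam) * ir (θ a) + lam * ir (θ b) - ir σ) / (1 / 2 - ir σ) ∧
      (ir (p a) - ir q) / (1 / 2 - ir q) ≠ (ir (θ a) - ir σ) / (1 / 2 - ir σ)),
    ENNReal.ofReal (ν a) ^ (1 - lam) * ENNReal.ofReal (ν b) ^ lam *
      Phi q σ m k n (expOf ((1 - lam) * ir (p a) + lam * ir (p b)))
        (expOf ((1 - lam) * ir (θ a) + lam * ir (θ b)))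

/-- `Ψ₆`: infimum over triples `(α, β, γ) ∈ N₆` (with positive weights `τ` summing to `1`
interpolating `(1/q, 1/σ)`, the three points not collinear) of
`ν_α^{τ_α} ν_β^{τ_β} ν_γ^{τ_γ} Φ(q, σ)`. -/
def Psi6 {A : Type*} (q σ : ℝ≥0∞) (m k n : ℕ) (p θ : A → ℝ≥0∞) (ν : A → ℝ) : ℝ≥0∞ :=
  ⨅ (a : A) (b : A) (c : A) (ta : ℝ) (tb : ℝ) (tc : ℝ)
    (_ : 0 < ta ∧ 0 < tb ∧ 0 < tc ∧ ta + tb + tc = 1 ∧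
      ir q = ta * ir (p a) + tb * ir (p b) + tc * ir (p c) ∧
      ir σ = ta * ir (θ a) + tb * ir (θ b) + tc * ir (θ c) ∧
      (ir (p b) - ir (p a)) * (ir (θ c) - ir (θ a)) ≠
        (ir (p c) - ir (p a)) * (ir (θ b) - ir (θ a))),
    ENNReal.ofReal (ν a) ^ ta * ENNReal.ofReal (ν b) ^ tb * ENNReal.ofReal (ν c) ^ tc *
      Phi q σ m k n q σ

/-- `Ψ₇`: as `Ψ₆`, with `(1/2, 1/2)` in place of `(1/q, 1/σ)`. -/
def Psi7 {A : Type*} (q σ : ℝ≥0∞) (m k n : ℕ) (p θ : A → ℝ≥0∞) (ν : A → ℝ) : ℝ≥0∞ :=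
  ⨅ (a : A) (b : A) (c : A) (ta : ℝ) (tb : ℝ) (tc : ℝ)
    (_ : 0 < ta ∧ 0 < tb ∧ 0 < tc ∧ ta + tb + tc = 1 ∧
      (1 : ℝ) / 2 = ta * ir (p a) + tb * ir (p b) + tc * ir (p c) ∧
      (1 : ℝ) / 2 = ta * ir (θ a) + tb * ir (θ b) + tc * ir (θ c) ∧
      (ir (p b) - ir (p a)) * (ir (θ c) - ir (θ a)) ≠
        (ir (p c) - ir (p a)) * (ir (θ b) - ir (θ a))),
    ENNReal.ofReal (ν a) ^ ta * ENNReal.ofReal (ν b) ^ tb * ENNReal.ofReal (ν c) ^ tc *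
      Phi q σ m k n 2 2

/-- `min_{0 ≤ j ≤ 7} Ψ_j`. -/
def PsiMin {A : Type*} (q σ : ℝ≥0∞) (m k n : ℕ) (p θ : A → ℝ≥0∞) (ν : A → ℝ) : ℝ≥0∞ :=
  Psi0 q σ m k n p θ ν ⊓ Psi1 q σ m k n p θ ν ⊓ Psi2 q σ m k n p θ ν ⊓
    Psi3 q σ m k n p θ ν ⊓ Psi4 q σ m k n p θ ν ⊓ Psi5 q σ m k n p θ ν ⊓
    Psi6 q σ m k n p θ ν ⊓ Psi7 q σ m k n p θ ν

/-- The set `V^{m,k}_{r,l}`: the convex hull of all `γ(e)`, where `e` is the 0/1 matrix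
supported on the first `r` rows and first `l` columns and `γ` ranges over all
permutations of rows/columns composed with sign changes of rows/columns. -/
def Vset (m k r l : ℕ) : Set (Fin m → Fin k → ℝ) :=
  convexHull ℝ {y | ∃ (t₁ : Equiv.Perm (Fin m)) (t₂ : Equiv.Perm (Fin k))
      (e₁ : Fin m → ℝ) (e₂ : Fin k → ℝ),
    (∀ i, e₁ i = 1 ∨ e₁ i = -1) ∧ (∀ j, e₂ j = 1 ∨ e₂ j = -1) ∧
    y = fun i j => e₁ i * e₂ j * (if (t₁ i : ℕ) < r ∧ (t₂ j : ℕ) < l then 1 else 0)}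



section Helpers

variable {ι : Type*} [Fintype ι]

lemma le_abs_ciSup (x : ι → ℝ) (i : ι) : |x i| ≤ ⨆ j, |x j| :=
  le_ciSup (f := fun j => |x j|) (Set.Finite.bddAbove (Set.finite_range _)) i

lemma lNorm_nonneg (s : ℝ≥0∞) (x : ι → ℝ) : 0 ≤ lNorm s x := by
  unfold lNorm
  split
  · exact Real.iSup_nonneg fun i => abs_nonneg _
  · exact Real.rpow_nonneg
      (Finset.sum_nonneg fun i _ => Real.rpow_nonneg (abs_nonneg _) _) _

lemma toReal_pos_of_one_le {s : ℝ≥0∞} (hs : 1 ≤ s) (h : s ≠ ∞) : 0 < s.toReal :=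
  ENNReal.toReal_pos (fun h0 => by simp [h0] at hs) h

lemma one_le_toReal_of {s : ℝ≥0∞} (hs : 1 ≤ s) (h : s ≠ ∞) : 1 ≤ s.toReal := by
  rw [← ENNReal.toReal_one]
  exact ENNReal.toReal_mono h hs

lemma abs_le_lNorm {s : ℝ≥0∞} (hs : 1 ≤ s) (x : ι → ℝ) (i : ι) : |x i| ≤ lNorm s x := by
  unfold lNorm
  split <;> rename_i h
  · exact le_abs_ciSup x i
  · have ht : 0 < s.toReal := toReal_pos_of_one_le hs h
    have key : (|x i| ^ s.toReal) ^ (1 / s.toReal) = |x i| := by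
      rw [← Real.rpow_mul (abs_nonneg _), mul_one_div_cancel ht.ne', Real.rpow_one]
    calc |x i| = (|x i| ^ s.toReal) ^ (1 / s.toReal) := key.symm
      _ ≤ (∑ j, |x j| ^ s.toReal) ^ (1 / s.toReal) :=
          Real.rpow_le_rpow (Real.rpow_nonneg (abs_nonneg _) _)
            (Finset.single_le_sum (fun j _ => Real.rpow_nonneg (abs_nonneg _) _)
              (Finset.mem_univ i)) (by positivity)

lemma lNorm_mono {s : ℝ≥0∞} (hs : 1 ≤ s) {x y : ι → ℝ} (h : ∀ i, |x i| ≤ |y i|) :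
    lNorm s x ≤ lNorm s y := by
  unfold lNorm
  split <;> rename_i hinf
  · exact Real.iSup_le (fun i => (h i).trans (le_abs_ciSup y i))
      (Real.iSup_nonneg fun i => abs_nonneg _)
  · refine Real.rpow_le_rpow (Finset.sum_nonneg fun i _ => Real.rpow_nonneg (abs_nonneg _) _)
      (Finset.sum_le_sum fun i _ => ?_) (by positivity)
    exact Real.rpow_le_rpow (abs_nonneg _) (h i) ENNReal.toReal_nonneg

lemma lNorm_le_card_mul {s : ℝ≥0∞} (hs : 1 ≤ s) {x : ι → ℝ} {C : ℝ} (hC : 0 ≤ C)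
    (h : ∀ i, |x i| ≤ C) : lNorm s x ≤ (Fintype.card ι : ℝ) * C := by
  rcases Nat.eq_zero_or_pos (Fintype.card ι) with hcard | hcard
  · haveI : IsEmpty ι := Fintype.card_eq_zero_iff.mp hcard
    unfold lNorm
    split <;> rename_i hinf
    · rw [Real.iSup_of_isEmpty]
      positivity
    · have ht : 0 < s.toReal := toReal_pos_of_one_le hs hinf
      rw [Finset.univ_eq_empty, Finset.sum_empty, Real.zero_rpow (by positivity)]
      positivity
  have hcard1 : (1 : ℝ) ≤ (Fintype.card ι : ℝ) := by exact_mod_cast hcard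
  unfold lNorm
  split <;> rename_i hinf
  · refine Real.iSup_le (fun i => (h i).trans ?_) (by positivity)
    exact le_mul_of_one_le_left hC hcard1
  · have ht : 0 < s.toReal := toReal_pos_of_one_le hs hinf
    have ht1 : 1 ≤ s.toReal := one_le_toReal_of hs hinf
    have key : ((((Fintype.card ι : ℝ)) * C) ^ s.toReal) ^ (1 / s.toReal)
        = (Fintype.card ι : ℝ) * C := by
      rw [← Real.rpow_mul (by positivity), mul_one_div_cancel ht.ne', Real.rpow_one]
    calc (∑ i, |x i| ^ s.toReal) ^ (1 / s.toReal)
        ≤ (∑ _i : ι, C ^ s.toReal) ^ (1 / s.toReal) := by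
          refine Real.rpow_le_rpow (Finset.sum_nonneg fun i _ =>
              Real.rpow_nonneg (abs_nonneg _) _)
            (Finset.sum_le_sum fun i _ => Real.rpow_le_rpow (abs_nonneg _) (h i)
              ENNReal.toReal_nonneg) (by positivity)
      _ ≤ (((Fintype.card ι : ℝ) * C) ^ s.toReal) ^ (1 / s.toReal) := by
          refine Real.rpow_le_rpow (by positivity) ?_ (by positivity)
          rw [Finset.sum_const, Finset.card_univ, nsmul_eq_mul,
            Real.mul_rpow (by positivity) hC]
          refine mul_le_mul_of_nonneg_right ?_ (Real.rpow_nonneg hC _)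
          calc (Fintype.card ι : ℝ) = (Fintype.card ι : ℝ) ^ (1 : ℝ) := (Real.rpow_one _).symm
            _ ≤ (Fintype.card ι : ℝ) ^ s.toReal :=
                Real.rpow_le_rpow_of_exponent_le hcard1 ht1
      _ = (Fintype.card ι : ℝ) * C := key

lemma lNorm_add_le {s : ℝ≥0∞} (hs : 1 ≤ s) (x y : ι → ℝ) :
    lNorm s (fun i => x i + y i) ≤ lNorm s x + lNorm s y := by
  unfold lNorm
  split <;> rename_i hinf
  · refine Real.iSup_le (fun i => ?_)
      (add_nonneg (Real.iSup_nonneg fun i => abs_nonneg _)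
        (Real.iSup_nonneg fun i => abs_nonneg _))
    exact (abs_add_le _ _).trans (add_le_add (le_abs_ciSup x i) (le_abs_ciSup y i))
  · exact Real.Lp_add_le Finset.univ x y (one_le_toReal_of hs hinf)

lemma lNorm_const_mul {s : ℝ≥0∞} (hs : 1 ≤ s) (c : ℝ) (x : ι → ℝ) :
    lNorm s (fun i => c * x i) = |c| * lNorm s x := by
  unfold lNorm
  split <;> rename_i hinf
  · simp only [abs_mul]
    exact (Real.mul_iSup_of_nonneg (abs_nonneg c) _).symm
  · have ht : 0 < s.toReal := toReal_pos_of_one_le hs hinf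
    have h1 : ∀ i, |c * x i| ^ s.toReal = |c| ^ s.toReal * |x i| ^ s.toReal := fun i => by
      rw [abs_mul, Real.mul_rpow (abs_nonneg _) (abs_nonneg _)]
    rw [Finset.sum_congr rfl fun i _ => h1 i, ← Finset.mul_sum,
      Real.mul_rpow (Real.rpow_nonneg (abs_nonneg _) _)
        (Finset.sum_nonneg fun i _ => Real.rpow_nonneg (abs_nonneg _) _),
      ← Real.rpow_mul (abs_nonneg _), mul_one_div_cancel ht.ne', Real.rpow_one]

lemma continuous_lNorm {s : ℝ≥0∞} (hs : 1 ≤ s) :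
    Continuous fun x : ι → ℝ => lNorm s x := by
  by_cases hinf : s = ∞
  · simp only [lNorm, if_pos hinf]
    have heq : (fun x : ι → ℝ => ⨆ i, |x i|) = fun x : ι → ℝ => ‖x‖ := by
      funext x
      refine le_antisymm (Real.iSup_le (fun i => ?_) (norm_nonneg x)) ?_
      · simpa [Real.norm_eq_abs] using norm_le_pi_norm x i
      · rw [pi_norm_le_iff_of_nonneg (Real.iSup_nonneg fun i => abs_nonneg _)]
        intro i
        rw [Real.norm_eq_abs]
        exact le_abs_ciSup x i
    rw [heq]
    exact continuous_norm
  · have ht : 0 < s.toReal := toReal_pos_of_one_le hs hinf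
    simp only [lNorm, if_neg hinf]
    refine Continuous.rpow_const ?_ fun x => Or.inr (by positivity)
    exact continuous_finset_sum _ fun i _ =>
      ((continuous_apply i).abs).rpow_const fun x => Or.inr ht.le

variable {m k : ℕ} {p θ : ℝ≥0∞}

lemma mixedNorm_nonneg (x : Fin m → Fin k → ℝ) : 0 ≤ mixedNorm p θ x :=
  lNorm_nonneg _ _

lemma mixedNorm_smul (hp : 1 ≤ p) (hθ : 1 ≤ θ) (c : ℝ) (x : Fin m → Fin k → ℝ) :
    mixedNorm p θ (c • x) = |c| * mixedNorm p θ x := by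
  unfold mixedNorm
  have h1 : (fun j => lNorm p fun i => (c • x) i j)
      = fun j => |c| * lNorm p (fun i => x i j) := by
    funext j
    exact lNorm_const_mul hp c (fun i => x i j)
  rw [h1]
  exact (lNorm_const_mul hθ |c| _).trans (by rw [abs_abs])

lemma mixedNorm_add_le (hp : 1 ≤ p) (hθ : 1 ≤ θ) (x y : Fin m → Fin k → ℝ) :
    mixedNorm p θ (x + y) ≤ mixedNorm p θ x + mixedNorm p θ y := by
  unfold mixedNorm
  calc lNorm θ (fun j => lNorm p fun i => (x + y) i j)
      ≤ lNorm θ (fun j => lNorm p (fun i => x i j) + lNorm p (fun i => y i j)) := by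
        refine lNorm_mono hθ fun j => ?_
        rw [abs_of_nonneg (lNorm_nonneg _ _),
          abs_of_nonneg (add_nonneg (lNorm_nonneg _ _) (lNorm_nonneg _ _))]
        exact lNorm_add_le hp _ _
    _ ≤ _ := lNorm_add_le hθ _ _

lemma abs_le_mixedNorm (hp : 1 ≤ p) (hθ : 1 ≤ θ) (x : Fin m → Fin k → ℝ)
    (i : Fin m) (j : Fin k) : |x i j| ≤ mixedNorm p θ x := by
  refine (abs_le_lNorm hp (fun i => x i j) i).trans ?_
  have h2 := abs_le_lNorm hθ (fun j => lNorm p fun i => x i j) j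
  rwa [abs_of_nonneg (lNorm_nonneg _ _)] at h2

lemma mixedNorm_le_of_bound (hp : 1 ≤ p) (hθ : 1 ≤ θ) {x : Fin m → Fin k → ℝ} {C : ℝ}
    (hC : 0 ≤ C) (h : ∀ i j, |x i j| ≤ C) :
    mixedNorm p θ x ≤ (m : ℝ) * k * C := by
  have h1 : ∀ j, |lNorm p fun i => x i j| ≤ (m : ℝ) * C := fun j => by
    rw [abs_of_nonneg (lNorm_nonneg _ _)]
    simpa [Fintype.card_fin] using lNorm_le_card_mul hp hC (fun i => h i j)
  have h2 := lNorm_le_card_mul hθ (C := (m : ℝ) * C) (by positivity) h1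
  simpa [mixedNorm, Fintype.card_fin, mul_assoc, mul_comm, mul_left_comm] using h2

lemma continuous_mixedNorm (hp : 1 ≤ p) (hθ : 1 ≤ θ) :
    Continuous fun x : Fin m → Fin k → ℝ => mixedNorm p θ x := by
  unfold mixedNorm
  exact (continuous_lNorm hθ).comp (continuous_pi fun j =>
    (continuous_lNorm hp).comp (continuous_pi fun i =>
      (continuous_apply j).comp (continuous_apply i)))

lemma mem_smul_mixedBall_iff (hp : 1 ≤ p) (hθ : 1 ≤ θ) {c : ℝ} (hc : 0 < c)
    {x : Fin m → Fin k → ℝ} :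
    x ∈ c • mixedBall m k p θ ↔ mixedNorm p θ x ≤ c := by
  rw [Set.mem_smul_set_iff_inv_smul_mem₀ hc.ne']
  show mixedNorm p θ (c⁻¹ • x) ≤ 1 ↔ _
  rw [mixedNorm_smul hp hθ, abs_of_nonneg (inv_nonneg.2 hc.le), mul_comm,
    ← div_eq_mul_inv, div_le_one hc]

end Helpers

/-- **Reduction to a finite subfamily.** If `inf_α ν_α > 0`, then there are finitely
many indices `α_1, …, α_l ∈ A` such that
`M ⊆ ⋂_{i=1}^{l} ν_{α_i} B^{m,k}_{p_{α_i},θ_{α_i}} ⊆ 2M`, where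
`M = ⋂_{α ∈ A} ν_α B^{m,k}_{p_α,θ_α}`. -/
theorem statement16 (m k : ℕ) (hm : 0 < m) (hk : 0 < k) (A : Type*) [Nonempty A]
    (p θ : A → ℝ≥0∞) (hp : ∀ a, 1 ≤ p a) (hθ : ∀ a, 1 ≤ θ a)
    (ν : A → ℝ) (hν : ∀ a, 0 < ν a) (hinf : 0 < ⨅ a : A, ν a) :
    ∃ (l : ℕ) (α : Fin l → A),
      (⋂ a : A, ν a • mixedBall m k (p a) (θ a)) ⊆
          (⋂ i : Fin l, ν (α i) • mixedBall m k (p (α i)) (θ (α i))) ∧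
        (⋂ i : Fin l, ν (α i) • mixedBall m k (p (α i)) (θ (α i))) ⊆
          (2 : ℝ) • ⋂ a : A, ν a • mixedBall m k (p a) (θ a) := by
  classical
  haveI : Nonempty (Fin m) := ⟨⟨0, hm⟩⟩
  haveI : Nonempty (Fin k) := ⟨⟨0, hk⟩⟩
  set ε := ⨅ a : A, ν a with hεdef
  have hbdd : BddBelow (Set.range ν) := ⟨0, by rintro _ ⟨a, rfl⟩; exact (hν a).le⟩
  have hεle : ∀ a, ε ≤ ν a := fun a => ciInf_le hbdd a
  obtain ⟨a0⟩ := ‹Nonempty A›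
  set N : A → (Fin m → Fin k → ℝ) → ℝ := fun a x => mixedNorm (p a) (θ a) x with hNdef
  have hmem : ∀ (a : A) (c : ℝ), 0 < c → ∀ x : Fin m → Fin k → ℝ,
      (x ∈ c • mixedBall m k (p a) (θ a) ↔ N a x ≤ c) :=
    fun a c hc x => mem_smul_mixedBall_iff (hp a) (hθ a) hc
  set M : Set (Fin m → Fin k → ℝ) := ⋂ a : A, ν a • mixedBall m k (p a) (θ a) with hMdef
  have hMmem : ∀ x, x ∈ M ↔ ∀ a, N a x ≤ ν a := by
    intro x
    rw [hMdef, Set.mem_iInter]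
    exact forall_congr' fun a => hmem a _ (hν a) x
  -- the compact ambient set
  set T : Set (Fin m → Fin k → ℝ) := {x | N a0 x ≤ ν a0} with hTdef
  have hTcompact : IsCompact T := by
    refine Metric.isCompact_of_isClosed_isBounded
      (isClosed_le (continuous_mixedNorm (hp a0) (hθ a0)) continuous_const) ?_
    rw [Metric.isBounded_iff_subset_closedBall 0]
    refine ⟨ν a0, fun x hx => ?_⟩
    rw [Metric.mem_closedBall, dist_zero_right]
    refine (pi_norm_le_iff_of_nonneg (hν a0).le).2 fun i => ?_
    refine (pi_norm_le_iff_of_nonneg (hν a0).le).2 fun j => ?_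
    rw [Real.norm_eq_abs]
    exact (abs_le_mixedNorm (hp a0) (hθ a0) x i j).trans hx
  set ρ : ℝ := ε / ((m : ℝ) * k) with hρdef
  have hmk : (0 : ℝ) < (m : ℝ) * k := by positivity
  have hρpos : 0 < ρ := div_pos hinf hmk
  -- the open neighborhood of M
  set V : Set (Fin m → Fin k → ℝ) := ⋃ z ∈ M, Metric.ball z ρ with hVdef
  have hVopen : IsOpen V := isOpen_biUnion fun _ _ => Metric.isOpen_ball
  have hKcompact : IsCompact (T \ V) := hTcompact.diff hVopen
  have hUopen : ∀ a : A, IsOpen {x : Fin m → Fin k → ℝ | N a x ≤ ν a}ᶜ := fun a =>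
    (isClosed_le (continuous_mixedNorm (hp a) (hθ a)) continuous_const).isOpen_compl
  have hcover : T \ V ⊆ ⋃ a : A, {x : Fin m → Fin k → ℝ | N a x ≤ ν a}ᶜ := by
    intro x hx
    by_contra hcon
    simp only [Set.mem_iUnion, Set.mem_compl_iff, Set.mem_setOf_eq, not_exists, not_not] at hcon
    exact hx.2 (Set.mem_biUnion ((hMmem x).2 hcon) (Metric.mem_ball_self hρpos))
  obtain ⟨t, ht⟩ := hKcompact.elim_finite_subcover _ hUopen hcover
  set s : Finset A := insert a0 t with hsdef
  refine ⟨s.toList.length, fun i => s.toList.get i, ?_, ?_⟩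
  · exact fun x hx => Set.mem_iInter.2 fun i => Set.mem_iInter.1 hx _
  · intro x hx
    have hx' : ∀ a ∈ s, N a x ≤ ν a := by
      intro a ha
      obtain ⟨i, hi⟩ := List.mem_iff_get.mp (Finset.mem_toList.2 ha)
      subst hi
      exact (hmem _ _ (hν _) x).1 (Set.mem_iInter.1 hx i)
    have hxT : x ∈ T := hx' a0 (Finset.mem_insert_self a0 t)
    have hxV : x ∈ V := by
      by_contra hxV
      have hxK : x ∈ T \ V := ⟨hxT, hxV⟩
      obtain ⟨a, ha⟩ := Set.mem_iUnion.1 (ht hxK)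
      simp only [Set.mem_iUnion, Set.mem_compl_iff, Set.mem_setOf_eq] at ha
      obtain ⟨hat, hax⟩ := ha
      exact hax (hx' a (Finset.mem_insert_of_mem hat))
    obtain ⟨z, hzM, hzx⟩ := Set.mem_iUnion₂.1 hxV
    have hdist : dist x z < ρ := Metric.mem_ball.1 hzx
    have hbound : ∀ a, N a x ≤ 2 * ν a := by
      intro a
      have hxz : N a (x - z) ≤ ε := by
        have h1 : ∀ i j, |(x - z) i j| ≤ ‖x - z‖ := by
          intro i j
          have h2 : ‖(x - z) i‖ ≤ ‖x - z‖ := norm_le_pi_norm (x - z) i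
          have h3 : ‖(x - z) i j‖ ≤ ‖(x - z) i‖ := norm_le_pi_norm ((x - z) i) j
          rw [Real.norm_eq_abs] at h3
          exact h3.trans h2
        have h4 := mixedNorm_le_of_bound (hp a) (hθ a) (norm_nonneg (x - z)) h1
        have h5 : ‖x - z‖ < ρ := by rwa [← dist_eq_norm]
        have h6 : (m : ℝ) * k * ‖x - z‖ ≤ (m : ℝ) * k * ρ :=
          mul_le_mul_of_nonneg_left h5.le hmk.le
        have h7 : (m : ℝ) * k * ρ = ε := by
          rw [hρdef]
          field_simp
        exact h4.trans (h6.trans_eq h7)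
      have hzle : N a z ≤ ν a := (hMmem z).1 hzM a
      have htri : N a x ≤ N a z + N a (x - z) := by
        have : z + (x - z) = x := by abel
        calc N a x = N a (z + (x - z)) := by rw [this]
          _ ≤ N a z + N a (x - z) := mixedNorm_add_le (hp a) (hθ a) z (x - z)
      have := hεle a
      linarith
    rw [Set.mem_smul_set_iff_inv_smul_mem₀ (two_ne_zero)]
    rw [Set.mem_iInter]
    intro a
    refine (hmem a _ (hν a) _).2 ?_
    have h8 : N a ((2 : ℝ)⁻¹ • x) = |(2 : ℝ)⁻¹| * N a x :=
      mixedNorm_smul (hp a) (hθ a) _ x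
    rw [h8, abs_of_nonneg (by norm_num : (0:ℝ) ≤ (2:ℝ)⁻¹)]
    have := hbound a
    linarith


end
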